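/- arXiv:1709.05210 — 2 statements merged into one kernel-verified Lean document; each statement's English description precedes it below -/
import Mathlib

section
/- Let A be an ℝ-linear map assigning to each tangent vector X an endomorphism A_X of a 4-dimensional real inner product space with orthogonal complex structure J, such that A_X ∘ J = -J ∘ A_X for all X (complex anti-linearity) and A_{JX} = -J ∘ A_X for all X (the almost Kähler condition). Then the tensor β defined by β(X,Y,Z,W) = g([A_X, A_Y]Z, W), viewed as a map Λ² → Λ², has image contained in ℂ·F when restricted to (1,1)-forms; moreover its component β̃ along F⊗F satisfies β̃ = -|A₁₁₂|² - |A₂₁₂|² where A_{αβγ} are the components of A in a unitary frame. -/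
/-
The skew-symmetric endomorphisms of `ℝ⁴` anticommuting with `J` form a plane, spanned by two
endomorphisms `K`, `L` that complete `J` to a quaternionic triple: `K ∘ L = -(L ∘ K) = J`.
Hence `A_X = a(X) K + b(X) L` and `[A_X, A_Y] = 2 (a(X) b(Y) - b(X) a(Y)) J`, which is the first
claim. The almost Kähler condition reads `a ∘ J = b`, `b ∘ J = -a`; with it both `β̃` and
`-|A₁₁₂|² - |A₂₁₂|²` come out as `-2 (a² + b²)(e₀) - 2 (a² + b²)(e₂)`, since
`A₁₁₂ = √2 (a - i b)(e₀)` and `A₂₁₂ = √2 (a - i b)(e₂)`.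
-/

open Complex

namespace Stmt5

/-- The standard model `V = ℝ⁴` of the 4-dimensional real inner product space. -/
abbrev V := EuclideanSpace ℝ (Fin 4)

/-- Standard basis vectors. -/
noncomputable def e (i : Fin 4) : V := EuclideanSpace.single i 1

/-- The standard orthogonal complex structure: `J e₀ = e₁`, `J e₁ = -e₀`,
`J e₂ = e₃`, `J e₃ = -e₂`. -/
def J : V →ₗ[ℝ] V where
  toFun v := WithLp.toLp 2 ![-(v 1), v 0, -(v 3), v 2]
  map_add' x y := by ext i; fin_cases i <;> (try simp [EuclideanSpace]) <;> (try ring)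
  map_smul' c x := by ext i; fin_cases i <;> (try simp [EuclideanSpace]) <;> (try ring)

/-- The fundamental 2-form `F = g(J·,·)`. -/
noncomputable def F (X Y : V) : ℝ := inner ℝ (J X) Y

/-- The complexified tangent space. -/
abbrev VC := Fin 4 → ℂ

/-- The complex-bilinear extension of `A` to `VC`, via the real components
`⟪A eᵢ eⱼ, e_k⟫`. -/
noncomputable def AC (A : V →ₗ[ℝ] V →ₗ[ℝ] V) (X Y : VC) : VC := fun k =>
  ∑ i : Fin 4, ∑ j : Fin 4, X i * Y j * ((inner ℝ (A (e i) (e j)) (e k) : ℝ) : ℂ)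

/-- The complex-bilinear extension of the metric `g` to `VC`. -/
noncomputable def gC (v w : VC) : ℂ := ∑ i : Fin 4, v i * w i

/-- The unitary frame vector `z₁ = (e₀ - i J e₀)/√2 = (e₀ - i e₁)/√2` of `T^{1,0}`. -/
noncomputable def z1 : VC := fun i => (![1, -Complex.I, 0, 0] i) / (Real.sqrt 2 : ℂ)

/-- The unitary frame vector `z₂ = (e₂ - i e₃)/√2`. -/
noncomputable def z2 : VC := fun i => (![0, 0, 1, -Complex.I] i) / (Real.sqrt 2 : ℂ)

/-- The component `A₁₁₂ = g(A_{z₁} z₁, z₂)`. -/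
noncomputable def A112 (A : V →ₗ[ℝ] V →ₗ[ℝ] V) : ℂ := gC (AC A z1 z1) z2

/-- The component `A₂₁₂ = g(A_{z₂} z₁, z₂)`. -/
noncomputable def A212 (A : V →ₗ[ℝ] V →ₗ[ℝ] V) : ℂ := gC (AC A z2 z1) z2

/-- The tensor `β(X,Y,Z,W) = g([A_X, A_Y] Z, W)`. -/
noncomputable def beta (A : V →ₗ[ℝ] V →ₗ[ℝ] V) (X Y Z W : V) : ℝ :=
  inner ℝ (A X (A Y Z) - A Y (A X Z)) W

/-- The component `β̃` of `β` along `F ⊗ F`: the value of `β` on the pair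
`(F/√2, F/√2)` of unit multiples of `F = e⁰∧e¹ + e²∧e³`. -/
noncomputable def betaTilde (A : V →ₗ[ℝ] V →ₗ[ℝ] V) : ℝ :=
  (1 / 2) * (beta A (e 0) (e 1) (e 0) (e 1) + beta A (e 0) (e 1) (e 2) (e 3)
    + beta A (e 2) (e 3) (e 0) (e 1) + beta A (e 2) (e 3) (e 2) (e 3))

def K : V →ₗ[ℝ] V where
  toFun v := WithLp.toLp 2 ![-(v 2), v 3, v 0, -(v 1)]
  map_add' x y := by ext i; fin_cases i <;> simp <;> ring
  map_smul' c x := by ext i; fin_cases i <;> simp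

def L : V →ₗ[ℝ] V where
  toFun v := WithLp.toLp 2 ![-(v 3), -(v 2), v 1, v 0]
  map_add' x y := by ext i; fin_cases i <;> simp <;> ring
  map_smul' c x := by ext i; fin_cases i <;> simp

theorem inner_e_right (v : V) (k : Fin 4) : inner ℝ v (e k) = v k := by
  simp [e, EuclideanSpace.inner_single_right]

theorem J_e_zero : J (e 0) = e 1 := by
  ext k; fin_cases k <;> simp [J, e]

theorem J_e_two : J (e 2) = e 3 := by
  ext k; fin_cases k <;> simp [J, e]

theorem eq_smul_K_add_smul_L (T : V →ₗ[ℝ] V)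
    (hskew : ∀ u v : V, inner ℝ (T u) v = -inner ℝ u (T v))
    (hanti : ∀ v : V, T (J v) = -J (T v)) :
    T = T (e 0) 2 • K + T (e 0) 3 • L := by
  have hs (i k : Fin 4) : T (e i) k = -T (e k) i := by
    have h := hskew (e i) (e k)
    rw [inner_e_right, real_inner_comm, inner_e_right] at h
    linarith
  have h1 : T (e 1) = -J (T (e 0)) := by rw [← hanti, J_e_zero]
  have h3 : T (e 3) = -J (T (e 2)) := by rw [← hanti, J_e_two]
  have t00 : T (e 0) 0 = 0 := by linarith [hs 0 0]
  have t10 : T (e 0) 1 = 0 := by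
    have h : T (e 1) 0 = T (e 0) 1 := by rw [h1]; simp [J]
    linarith [hs 1 0]
  have t02 : T (e 2) 0 = -T (e 0) 2 := hs 2 0
  have t12 : T (e 2) 1 = -T (e 0) 3 := by simpa [h1, J] using hs 2 1
  have t22 : T (e 2) 2 = 0 := by linarith [hs 2 2]
  have t32 : T (e 2) 3 = 0 := by
    have h : T (e 3) 2 = T (e 2) 3 := by rw [h3]; simp [J]
    linarith [hs 3 2]
  refine Module.Basis.ext (EuclideanSpace.basisFun (Fin 4) ℝ).toBasis fun i => ?_
  rw [EuclideanSpace.basisFun_toBasis, PiLp.basisFun_apply]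
  change T (e i) = _
  ext k
  fin_cases i <;> fin_cases k <;> simp [h1, h3, K, L, J, t00, t10, t02, t12, t22, t32]

theorem comp_sub_comp_smul_K_add_smul_L (u v u' v' : ℝ) :
    (u • K + v • L) ∘ₗ (u' • K + v' • L) - (u' • K + v' • L) ∘ₗ (u • K + v • L)
      = (2 * (u * v' - v * u')) • J := by
  ext w k; fin_cases k <;> simp [K, L, J] <;> ring

noncomputable def coeffK (A : V →ₗ[ℝ] V →ₗ[ℝ] V) (X : V) : ℝ := A X (e 0) 2

noncomputable def coeffL (A : V →ₗ[ℝ] V →ₗ[ℝ] V) (X : V) : ℝ := A X (e 0) 3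

theorem ofReal_sqrt_two_sq : ((Real.sqrt 2 : ℝ) : ℂ) ^ 2 = 2 := by
  norm_cast; simp

section

variable {A : V →ₗ[ℝ] V →ₗ[ℝ] V}

theorem coeffK_J (haK : ∀ X v : V, A (J X) v = -J (A X v)) (X : V) :
    coeffK A (J X) = coeffL A X := by
  rw [coeffK, haK]; simp [coeffL, J]

theorem coeffL_J (haK : ∀ X v : V, A (J X) v = -J (A X v)) (X : V) :
    coeffL A (J X) = -coeffK A X := by
  rw [coeffL, haK]; simp [coeffK, J]

theorem apply_eq_coeffK_smul_K_add_coeffL_smul_L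
    (hskew : ∀ X u v : V, inner ℝ (A X u) v = -inner ℝ u (A X v))
    (hanti : ∀ X v : V, A X (J v) = -J (A X v)) (X : V) :
    A X = coeffK A X • K + coeffL A X • L :=
  eq_smul_K_add_smul_L (A X) (hskew X) (hanti X)

theorem beta_eq_mul_F (hskew : ∀ X u v : V, inner ℝ (A X u) v = -inner ℝ u (A X v))
    (hanti : ∀ X v : V, A X (J v) = -J (A X v)) (X Y Z W : V) :
    beta A X Y Z W = 2 * (coeffK A X * coeffL A Y - coeffL A X * coeffK A Y) * F Z W := by
  have hcomm : A X ∘ₗ A Y - A Y ∘ₗ A X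
      = (2 * (coeffK A X * coeffL A Y - coeffL A X * coeffK A Y)) • J := by
    rw [apply_eq_coeffK_smul_K_add_coeffL_smul_L hskew hanti X,
      apply_eq_coeffK_smul_K_add_coeffL_smul_L hskew hanti Y, comp_sub_comp_smul_K_add_smul_L]
  rw [beta, F, ← LinearMap.comp_apply, ← LinearMap.comp_apply, ← LinearMap.sub_apply, hcomm,
    LinearMap.smul_apply, real_inner_smul_left]

theorem F_e_zero_e_one : F (e 0) (e 1) = 1 := by
  rw [F, J_e_zero, inner_e_right]; simp [e]

theorem F_e_two_e_three : F (e 2) (e 3) = 1 := by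
  rw [F, J_e_two, inner_e_right]; simp [e]

theorem betaTilde_eq (hskew : ∀ X u v : V, inner ℝ (A X u) v = -inner ℝ u (A X v))
    (hanti : ∀ X v : V, A X (J v) = -J (A X v))
    (haK : ∀ X v : V, A (J X) v = -J (A X v)) :
    betaTilde A = -2 * (coeffK A (e 0) ^ 2 + coeffL A (e 0) ^ 2)
      - 2 * (coeffK A (e 2) ^ 2 + coeffL A (e 2) ^ 2) := by
  simp only [betaTilde, beta_eq_mul_F hskew hanti, F_e_zero_e_one, F_e_two_e_three]
  rw [← J_e_zero, ← J_e_two, coeffK_J haK, coeffK_J haK, coeffL_J haK, coeffL_J haK]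
  ring

theorem gC_AC_z1_z2 (hskew : ∀ X u v : V, inner ℝ (A X u) v = -inner ℝ u (A X v))
    (hanti : ∀ X v : V, A X (J v) = -J (A X v)) (Z : VC) :
    gC (AC A Z z1) z2 = ∑ i, Z i * (coeffK A (e i) - coeffL A (e i) * I) := by
  have hA := apply_eq_coeffK_smul_K_add_coeffL_smul_L hskew hanti
  simp only [gC, AC, z1, z2, Fin.sum_univ_four, inner_e_right, hA]
  simp only [e, K, L, LinearMap.add_apply, LinearMap.smul_apply, LinearMap.coe_mk,
    AddHom.coe_mk, PiLp.add_apply, PiLp.smul_apply, smul_eq_mul, Matrix.cons_val,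
    ne_eq, Fin.reduceEq, not_false_eq_true, PiLp.single_eq_of_ne, PiLp.single_eq_same,
    mul_zero, mul_one, neg_zero, add_zero, zero_add, ofReal_zero]
  push_cast
  field_simp
  rw [ofReal_sqrt_two_sq]
  ring_nf
  rw [I_sq]
  ring

theorem A112_eq (hskew : ∀ X u v : V, inner ℝ (A X u) v = -inner ℝ u (A X v))
    (hanti : ∀ X v : V, A X (J v) = -J (A X v)) (haK : ∀ X v : V, A (J X) v = -J (A X v)) :
    A112 A = Real.sqrt 2 * (coeffK A (e 0) - coeffL A (e 0) * I) := by
  rw [A112, gC_AC_z1_z2 hskew hanti, Fin.sum_univ_four, ← J_e_zero, coeffK_J haK, coeffL_J haK]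
  simp only [z1, Matrix.cons_val, zero_div, zero_mul, add_zero, ofReal_neg]
  field_simp
  rw [ofReal_sqrt_two_sq]
  ring_nf
  rw [I_sq]
  ring

theorem A212_eq (hskew : ∀ X u v : V, inner ℝ (A X u) v = -inner ℝ u (A X v))
    (hanti : ∀ X v : V, A X (J v) = -J (A X v)) (haK : ∀ X v : V, A (J X) v = -J (A X v)) :
    A212 A = Real.sqrt 2 * (coeffK A (e 2) - coeffL A (e 2) * I) := by
  rw [A212, gC_AC_z1_z2 hskew hanti, Fin.sum_univ_four, ← J_e_two, coeffK_J haK, coeffL_J haK]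
  simp only [z2, Matrix.cons_val, zero_div, zero_mul, zero_add, ofReal_neg]
  field_simp
  rw [ofReal_sqrt_two_sq]
  ring_nf
  rw [I_sq]
  ring

end

theorem sq_norm_sqrt_two_mul_sub_mul_I (x y : ℝ) :
    ‖(Real.sqrt 2 : ℂ) * (x - y * I)‖ ^ 2 = 2 * (x ^ 2 + y ^ 2) := by
  rw [norm_mul, mul_pow, Complex.norm_real, Real.norm_of_nonneg (Real.sqrt_nonneg 2),
    Real.sq_sqrt zero_le_two, Complex.sq_norm, Complex.normSq_apply]
  simp [sq]

/-- Let `A : V → End(V)` assign to each tangent vector a skew-symmetric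
endomorphism, complex anti-linear (`A_X ∘ J = -J ∘ A_X`) and satisfying the almost
Kähler condition (`A_{JX} = -J ∘ A_X`).  Then for all `X, Y` the 2-form
`(Z,W) ↦ β(X,Y,Z,W) = g([A_X,A_Y]Z,W)` is a (real) multiple of the fundamental form
`F` — i.e. `β`, viewed as a map `Λ² → Λ²`, has image contained in `ℂ·F` (in
particular on `(1,1)`-form inputs) — and the component `β̃` of `β` along `F ⊗ F`
satisfies `β̃ = -|A₁₁₂|² - |A₂₁₂|²` in a unitary frame. -/
theorem stmt_5 (A : V →ₗ[ℝ] V →ₗ[ℝ] V)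
    (hskew : ∀ (X u v : V), (inner ℝ (A X u) v : ℝ) = -(inner ℝ u (A X v) : ℝ))
    (hanti : ∀ (X v : V), A X (J v) = -J (A X v))
    (haK : ∀ (X v : V), A (J X) v = -J (A X v)) :
    (∀ X Y : V, ∃ lam : ℝ, ∀ Z W : V, beta A X Y Z W = lam * F Z W) ∧
      betaTilde A = -(‖A112 A‖) ^ 2 - (‖A212 A‖) ^ 2 := by
  refine ⟨fun X Y => ⟨_, beta_eq_mul_F hskew hanti X Y⟩, ?_⟩
  rw [betaTilde_eq hskew hanti haK, A112_eq hskew hanti haK, A212_eq hskew hanti haK,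
    sq_norm_sqrt_two_mul_sub_mul_I, sq_norm_sqrt_two_mul_sub_mul_I]
  ring

end Stmt5
end

section
/- Assume the general reality constraints a + b = a' + b' and v ∈ ℝ hold for the curvature matrix entries (k, a, a', b, b', u, v, w, x, l with k,l,u,w ∈ ℝ). Then the 'constant holomorphic sectional curvature' conditions (x = 0, a' = -a, b = -a, l = k, u + 2v + w = 2k) hold if and only if both the 'self-duality' conditions (x = 0, a = b', u + 2v + w = k + l) and the 'Ricci form duality' conditions (k = l, a' + b = -(a + b')) hold. -/
/-! Only the complex entries need an argument. Under `a + b = a' + b'`, the substitution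
`b' = a` turns the relation into `a' = b`, so `a' + b = -(a + b')` reads `2 b = -2 a`;
conversely `a' = b = -a` forces `b' = a`. The real conditions match by linear arithmetic. -/

theorem eq_neg_and_eq_neg_iff_of_add_eq_add {K : Type*} [Field K] [CharZero K]
    {a a' b b' : K} (h : a + b = a' + b') :
    (a' = -a ∧ b = -a) ↔ (a = b' ∧ a' + b = -(a + b')) := by
  constructor
  · rintro ⟨rfl, rfl⟩
    have hb' : b' = a := by linear_combination -h
    exact ⟨hb'.symm, by rw [hb']; ring⟩
  · rintro ⟨rfl, hd⟩
    have hb : b = a' := by linear_combination h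
    subst hb
    have hb : b = -a := by linear_combination hd / 2
    exact ⟨hb, hb⟩

/-- Under the reality constraints `a + b = a' + b'` (and `v` real,
encoded by taking `v : ℝ`), the constant holomorphic sectional curvature conditions
`x = 0, a' = -a, b = -a, l = k, u + 2v + w = 2k` are equivalent to the conjunction of
the self-duality conditions `x = 0, a = b', u + 2v + w = k + l` and the Ricci form
duality conditions `k = l, a' + b = -(a + b')`. -/
theorem stmt_7 (a a' b b' x : ℂ) (k l u v w : ℝ)
    (hreal : a + b = a' + b') :
    (x = 0 ∧ a' = -a ∧ b = -a ∧ l = k ∧ u + 2 * v + w = 2 * k) ↔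
      ((x = 0 ∧ a = b' ∧ u + 2 * v + w = k + l) ∧
        (k = l ∧ a' + b = -(a + b'))) := by
  have hcomplex := eq_neg_and_eq_neg_iff_of_add_eq_add hreal
  constructor
  · rintro ⟨hx, ha', hb, rfl, hs⟩
    obtain ⟨hb', hd⟩ := hcomplex.1 ⟨ha', hb⟩
    exact ⟨⟨hx, hb', by linarith⟩, rfl, hd⟩
  · rintro ⟨⟨hx, hb', hs⟩, rfl, hd⟩
    obtain ⟨ha', hb⟩ := hcomplex.2 ⟨hb', hd⟩
    exact ⟨hx, ha', hb, rfl, by linarith⟩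
end
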